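/- arXiv:1503.07380 — 2 statements merged into one kernel-verified Lean document; each statement's English description precedes it below -/
import Mathlib

section
/- For every natural number l and every real number a > 0, ∫_{−1}^{1} P_l(x) e^{−a x} dx = 2 (−1)ˡ i_l(a). -/
open Real

/-- Legendre polynomial of degree `l`, via Rodrigues' formula. -/
noncomputable def legendreP (l : ℕ) (x : ℝ) : ℝ :=
  (1 / (2 ^ l * (Nat.factorial l : ℝ))) *
    iteratedDeriv l (fun y : ℝ => (y ^ 2 - 1) ^ l) x

/-- The operator `f ↦ (z ↦ f′(z)/z)` appearing in Rayleigh's formulas. -/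
noncomputable def rayleighOp (f : ℝ → ℝ) : ℝ → ℝ := fun z => deriv f z / z

/-- Modified spherical Bessel function of the first kind. -/
noncomputable def sphI (l : ℕ) (z : ℝ) : ℝ :=
  z ^ l * (rayleighOp^[l] fun w => Real.sinh w / w) z

/-!
Rodrigues' formula and `l` integrations by parts, whose boundary terms vanish because
`(x² - 1)ˡ` has a zero of order `l` at `±1`, turn the left side into
`(-a)ˡ / (2ˡ l!) ∫ (x² - 1)ˡ e^{-ax} dx`. On the other side, Poisson's integral
`J_l(z) = ∫_{-1}^{1} (1 - x²)ˡ e^{-zx} dx` satisfies `J_0(z) = 2 sinh z / z` and, differentiating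
under the integral sign and integrating by parts once more, `J_l'(z) = z J_{l+1}(z) / (2(l + 1))`.
This is the recursion of the Rayleigh operator, so `i_l(z) = zˡ J_l(z) / (2^{l+1} l!)`.
-/

open Nat Polynomial Set Filter Topology MeasureTheory intervalIntegral

theorem hasDerivAt_integral_of_continuous_deriv {E : Type*} [NormedAddCommGroup E]
    [NormedSpace ℝ E] [CompleteSpace E] {F F' : ℝ → ℝ → E} {a b z : ℝ}
    (hF : ∀ w, Continuous (F w)) (hF' : Continuous (Function.uncurry F'))
    (hderiv : ∀ w x, HasDerivAt (F · x) (F' w x) w) :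
    HasDerivAt (fun w => ∫ x in a..b, F w x) (∫ x in a..b, F' z x) z := by
  obtain ⟨C, hC⟩ :=
    ((isCompact_closedBall z 1).prod isCompact_uIcc).exists_bound_of_continuousOn hF'.continuousOn
  have hF'z : Continuous (F' z) := hF'.comp (continuous_const.prodMk continuous_id)
  exact (hasDerivAt_integral_of_dominated_loc_of_deriv_le (bound := fun _ => C)
    (Metric.ball_mem_nhds z one_pos) (.of_forall fun w => (hF w).aestronglyMeasurable)
    ((hF z).intervalIntegrable _ _) hF'z.aestronglyMeasurable
    (.of_forall fun x hx w hw =>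
      hC (w, x) ⟨Metric.ball_subset_closedBall hw, uIoc_subset_uIcc hx⟩)
    intervalIntegrable_const (.of_forall fun x _ w _ => hderiv w x)).2

theorem integral_deriv_mul_exp_of_eq_zero {f f' : ℝ → ℝ} {u v : ℝ} (c : ℝ)
    (hf : ∀ x ∈ uIcc u v, HasDerivAt f (f' x) x) (hf' : IntervalIntegrable f' volume u v)
    (hu : f u = 0) (hv : f v = 0) :
    ∫ x in u..v, f' x * exp (c * x) = -c * ∫ x in u..v, f x * exp (c * x) := by
  have hexp : ∀ x, HasDerivAt (fun x => exp (c * x)) (exp (c * x) * c) x := fun x =>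
    ((hasDerivAt_id x).const_mul c).exp.congr_deriv (by simp)
  have hcont : ContinuousOn f (uIcc u v) := fun x hx => (hf x hx).continuousAt.continuousWithinAt
  have hibp := intervalIntegral.integral_deriv_mul_eq_sub hf (fun x _ => hexp x) hf'
    ((by fun_prop : Continuous fun x => exp (c * x) * c).intervalIntegrable _ _)
  have hint₁ : IntervalIntegrable (fun x => f' x * exp (c * x)) volume u v :=
    hf'.mul_continuousOn (by fun_prop)
  have hint₂ : IntervalIntegrable (fun x => f x * (exp (c * x) * c)) volume u v :=
    (hcont.mul (by fun_prop)).intervalIntegrable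
  rw [hu, hv, zero_mul, zero_mul, sub_zero, intervalIntegral.integral_add hint₁ hint₂] at hibp
  have hpull : ∫ x in u..v, f x * (exp (c * x) * c) = c * ∫ x in u..v, f x * exp (c * x) := by
    rw [← intervalIntegral.integral_const_mul]
    congr 1 with x
    ring
  linarith

theorem integral_iterate_derivative_mul_exp (p : ℝ[X]) {u v : ℝ} (c : ℝ) {n : ℕ}
    (hp : ∀ k < n, (derivative^[k] p).IsRoot u ∧ (derivative^[k] p).IsRoot v) :
    ∫ x in u..v, (derivative^[n] p).eval x * exp (c * x) =
      (-c) ^ n * ∫ x in u..v, p.eval x * exp (c * x) := by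
  induction n with
  | zero => simp
  | succ n ih =>
    obtain ⟨hu, hv⟩ := hp n n.lt_succ_self
    rw [Function.iterate_succ_apply', integral_deriv_mul_exp_of_eq_zero c
      (fun x _ => (derivative^[n] p).hasDerivAt x)
      ((Polynomial.continuous _).intervalIntegrable _ _) hu hv, ih fun k hk => hp k (by omega),
      pow_succ]
    ring

theorem isRoot_iterate_derivative_pow {R : Type*} [CommRing R] {p : R[X]} {x : R}
    (hx : p.IsRoot x) {k l : ℕ} (hk : k < l) : (derivative^[k] (p ^ l)).IsRoot x := by
  have hpow : (p ^ (l - k)).IsRoot x := by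
    simp [IsRoot.def, hx.eq_zero, zero_pow (by omega : l - k ≠ 0)]
  exact hpow.dvd (pow_sub_dvd_iterate_derivative_pow p l k)

theorem iteratedDeriv_eval (p : ℝ[X]) (k : ℕ) :
    iteratedDeriv k (fun x => p.eval x) = fun x => (derivative^[k] p).eval x := by
  induction k with
  | zero => simp
  | succ k ih =>
    rw [iteratedDeriv_succ, ih, Function.iterate_succ_apply']
    exact funext fun x => Polynomial.deriv _

theorem legendreP_eq_eval (l : ℕ) (x : ℝ) :
    legendreP l x =
      (2 ^ l * (l ! : ℝ))⁻¹ * (derivative^[l] ((X ^ 2 - 1) ^ l : ℝ[X])).eval x := by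
  have hpoly : (fun y : ℝ => (y ^ 2 - 1) ^ l) = fun y => ((X ^ 2 - 1) ^ l : ℝ[X]).eval y := by
    simp
  rw [legendreP, one_div, hpoly, iteratedDeriv_eval]

theorem integral_legendreP_mul_exp (l : ℕ) (c : ℝ) :
    ∫ x in (-1 : ℝ)..1, legendreP l x * exp (c * x) =
      (-c) ^ l / (2 ^ l * (l ! : ℝ)) * ∫ x in (-1 : ℝ)..1, (x ^ 2 - 1) ^ l * exp (c * x) := by
  have hroots : ∀ k < l, (derivative^[k] ((X ^ 2 - 1) ^ l : ℝ[X])).IsRoot (-1) ∧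
      (derivative^[k] ((X ^ 2 - 1) ^ l : ℝ[X])).IsRoot 1 := fun k hk =>
    ⟨isRoot_iterate_derivative_pow (by simp) hk, isRoot_iterate_derivative_pow (by simp) hk⟩
  simp_rw [legendreP_eq_eval, mul_assoc, intervalIntegral.integral_const_mul,
    integral_iterate_derivative_mul_exp _ c hroots]
  simp [div_eq_inv_mul, mul_assoc]

noncomputable def besselPoissonIntegral (l : ℕ) (z : ℝ) : ℝ :=
  ∫ x in (-1 : ℝ)..1, (1 - x ^ 2) ^ l * exp (-z * x)

theorem besselPoissonIntegral_zero {z : ℝ} (hz : z ≠ 0) :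
    besselPoissonIntegral 0 z = 2 * sinh z / z := by
  have hexp := intervalIntegral.integral_comp_mul_left (a := -1) (b := 1) exp (neg_ne_zero.2 hz)
  simp only [besselPoissonIntegral, pow_zero, one_mul, hexp, integral_exp, sinh_eq, smul_eq_mul]
  field_simp
  ring_nf

theorem hasDerivAt_besselPoissonIntegral (l : ℕ) (z : ℝ) :
    HasDerivAt (besselPoissonIntegral l)
      (z / (2 * (l + 1)) * besselPoissonIntegral (l + 1) z) z := by
  have hderiv : ∀ w x : ℝ, HasDerivAt (fun w => (1 - x ^ 2) ^ l * exp (-w * x))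
      (-x * (1 - x ^ 2) ^ l * exp (-w * x)) w := fun w x =>
    (((hasDerivAt_id w).neg.mul_const x).exp.const_mul _).congr_deriv (by
      simp only [Pi.neg_apply, id_eq, neg_mul, one_mul, mul_neg, neg_inj]
      ring)
  have hprim : ∀ x : ℝ, HasDerivAt (fun x : ℝ => (1 - x ^ 2) ^ (l + 1) / (2 * (l + 1)))
      (-x * (1 - x ^ 2) ^ l) x := fun x =>
    ((((hasDerivAt_pow 2 x).const_sub 1).pow (l + 1)).div_const _).congr_deriv (by
      field_simp; push_cast; ring)
  have hibp := integral_deriv_mul_exp_of_eq_zero (-z) (u := -1) (v := 1) (fun x _ => hprim x)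
    ((by fun_prop : Continuous fun x : ℝ => -x * (1 - x ^ 2) ^ l).intervalIntegrable _ _)
    (by simp) (by simp)
  have hJ := hasDerivAt_integral_of_continuous_deriv (a := -1) (b := 1) (z := z)
    (fun w => by fun_prop) (by fun_prop) hderiv
  refine (hibp ▸ hJ).congr_deriv ?_
  rw [besselPoissonIntegral, ← intervalIntegral.integral_const_mul,
    ← intervalIntegral.integral_const_mul]
  congr 1 with x
  ring

theorem iterate_rayleighOp_sinh_div (l : ℕ) {z : ℝ} (hz : z ≠ 0) :
    (rayleighOp^[l] fun w => sinh w / w) z =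
      besselPoissonIntegral l z / (2 ^ (l + 1) * l !) := by
  induction l generalizing z with
  | zero =>
    rw [Function.iterate_zero_apply, besselPoissonIntegral_zero hz]
    ring
  | succ l ih =>
    have hlocal : (rayleighOp^[l] fun w => sinh w / w) =ᶠ[𝓝 z]
        fun w => besselPoissonIntegral l w / (2 ^ (l + 1) * l !) :=
      eventually_ne_nhds hz |>.mono fun w hw => ih hw
    rw [Function.iterate_succ_apply', rayleighOp, hlocal.deriv_eq,
      ((hasDerivAt_besselPoissonIntegral l z).div_const _).deriv, factorial_succ]
    push_cast
    field_simp
    ring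

theorem sphI_eq_besselPoissonIntegral (l : ℕ) {z : ℝ} (hz : z ≠ 0) :
    sphI l z = z ^ l / (2 ^ (l + 1) * l !) * besselPoissonIntegral l z := by
  rw [sphI, iterate_rayleighOp_sinh_div l hz]
  ring

theorem integral_sq_sub_one_pow_mul_exp (l : ℕ) (a : ℝ) :
    ∫ x in (-1 : ℝ)..1, (x ^ 2 - 1) ^ l * exp (-a * x) =
      (-1) ^ l * besselPoissonIntegral l a := by
  rw [besselPoissonIntegral, ← intervalIntegral.integral_const_mul]
  congr 1 with x
  rw [← neg_sub, neg_pow, mul_assoc]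

/-- `∫_{-1}^{1} P_l(x) e^{-a x} dx = 2 (-1)ˡ i_l(a)` for `a > 0`. -/
theorem legendre_exp_integral (l : ℕ) (a : ℝ) (ha : 0 < a) :
    ∫ x in (-1 : ℝ)..1, legendreP l x * Real.exp (-a * x) =
      2 * (-1) ^ l * sphI l a := by
  rw [integral_legendreP_mul_exp, integral_sq_sub_one_pow_mul_exp,
    sphI_eq_besselPoissonIntegral l ha.ne', neg_neg, pow_succ]
  field_simp
end

section
/- For every natural number l, ∫_0^∞ j_l(x)² dx = π/(2(2l+1)). Equivalently, for the potential V(r) = α/r² the first-order covariant-perturbation phase shift δ_l^{(1)}(k) = −(π/2) ∫_0^∞ r V(r) J_{l+1/2}(kr)² dr = −α k ∫_0^∞ j_l(kr)² dr equals −πα/(2(2l+1)) for every k > 0. -/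
open Real

/-- Spherical Bessel function of the first kind, via Rayleigh's formula. -/
noncomputable def sphJ (l : ℕ) (z : ℝ) : ℝ :=
  (-1) ^ l * z ^ l * (rayleighOp^[l] fun w => Real.sin w / w) z

/-!
Differentiating under the integral sign turns Rayleigh's formula into Poisson's representation
`j_l(x) = x^l / (2^(l+1) l!) ∫_{-1}^1 (1 - t²)^l cos (x t) dt`. It gives the recurrences
`j_l' = (l/x) j_l - j_{l+1}` and `j_{l+2} = ((2l+3)/x) j_{l+1} - j_l`, the bound `|j_l| ≤ 1` on
`0 < |x| ≤ 1`, and, by induction, `j_l = O(1/x)` at infinity. Consequently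
`x (j_l² + j_{l+1}²)` is an antiderivative of `(2l+1) j_l² - (2l+3) j_{l+1}²` vanishing at `0`
and at `∞`, so `(2l+1) ∫_0^∞ j_l²` does not depend on `l`. For `l = 0`, writing
`1/x² = ∫_0^∞ t e^{-xt} dt` and exchanging the integrals gives
`∫_0^∞ sin² x / x² dx = ∫_0^∞ 2 / (t² + 4) dt = π/2`.
-/

open MeasureTheory Filter Set Asymptotics Topology
open scoped Interval

theorem hasDerivAt_intervalIntegral_mul_comp_mul {w f f' : ℝ → ℝ} (hw : Continuous w)
    (hf : ∀ y, HasDerivAt f (f' y) y) (hf' : Continuous f') (hf'_le : ∀ y, |f' y| ≤ 1)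
    (a b x : ℝ) :
    HasDerivAt (fun x => ∫ t in a..b, w t * f (x * t))
      (∫ t in a..b, w t * (t * f' (x * t))) x := by
  have hfc : Continuous f := continuous_iff_continuousAt.2 fun y => (hf y).continuousAt
  refine (intervalIntegral.hasDerivAt_integral_of_dominated_loc_of_deriv_le (μ := volume)
    (F := fun x t => w t * f (x * t)) (F' := fun x t => w t * (t * f' (x * t)))
    (bound := fun t => |w t * t|) univ_mem (Eventually.of_forall fun y => ?_) ?_ ?_ ?_ ?_ ?_).2
  · exact (by fun_prop : Continuous fun t => w t * f (y * t)).aestronglyMeasurable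
  · exact (by fun_prop : Continuous fun t => w t * f (x * t)).intervalIntegrable _ _
  · exact (by fun_prop : Continuous fun t => w t * (t * f' (x * t))).aestronglyMeasurable
  · refine Eventually.of_forall fun t _ y _ => ?_
    rw [Real.norm_eq_abs, ← mul_assoc, abs_mul]
    exact mul_le_of_le_one_right (abs_nonneg _) (hf'_le _)
  · exact (by fun_prop : Continuous fun t => |w t * t|).intervalIntegrable _ _
  · refine Eventually.of_forall fun t _ y _ => ?_
    have := ((hf (y * t)).comp y ((hasDerivAt_id y).mul_const t)).const_mul (w t)
    simpa [mul_comm t] using this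

noncomputable def poissonInt (l : ℕ) (x : ℝ) : ℝ :=
  ∫ t in (-1 : ℝ)..1, (1 - t ^ 2) ^ l * cos (x * t)

theorem abs_poissonInt_le (l : ℕ) (x : ℝ) : |poissonInt l x| ≤ 2 := by
  have hle : ∀ t ∈ Ι (-1 : ℝ) 1, ‖(1 - t ^ 2) ^ l * cos (x * t)‖ ≤ 1 := by
    intro t ht
    rw [uIoc_of_le (by norm_num)] at ht
    have h0 : 0 ≤ 1 - t ^ 2 := by nlinarith [ht.1, ht.2]
    rw [norm_mul, norm_pow, Real.norm_of_nonneg h0]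
    exact mul_le_one₀ (pow_le_one₀ h0 (by nlinarith)) (norm_nonneg _) (abs_cos_le_one _)
  have := intervalIntegral.norm_integral_le_of_norm_le_const hle
  norm_num at this
  exact this

theorem poissonInt_zero {x : ℝ} (hx : x ≠ 0) : poissonInt 0 x = 2 * sin x / x := by
  have hderiv :
      ∀ t ∈ [[(-1 : ℝ), 1]], HasDerivAt (fun t => sin (x * t) / x) (cos (x * t)) t :=
    fun t _ => by
      have := (((hasDerivAt_id' t).const_mul x).sin).div_const x
      rwa [mul_one, mul_div_cancel_right₀ _ hx] at this
  simp only [poissonInt, pow_zero, one_mul]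
  rw [intervalIntegral.integral_eq_sub_of_hasDerivAt hderiv
    ((by fun_prop : Continuous fun t => cos (x * t)).intervalIntegrable _ _)]
  simp only [mul_one, mul_neg, sin_neg]
  ring

theorem integral_mul_sin_eq_poissonInt_succ (l : ℕ) (x : ℝ) :
    ∫ t in (-1 : ℝ)..1, t * (1 - t ^ 2) ^ l * sin (x * t) =
      x / (2 * (l + 1)) * poissonInt (l + 1) x := by
  have hsin : ∀ t ∈ [[(-1 : ℝ), 1]], HasDerivAt (fun t => sin (x * t)) (x * cos (x * t)) t :=
    fun t _ => by simpa [mul_comm] using ((hasDerivAt_id t).const_mul x).sin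
  have hweight : ∀ t ∈ [[(-1 : ℝ), 1]],
      HasDerivAt (fun t : ℝ => -((1 - t ^ 2) ^ (l + 1) / (2 * (l + 1))))
        (t * (1 - t ^ 2) ^ l) t :=
    fun t _ => by
      refine ((((hasDerivAt_pow 2 t).const_sub 1).fun_pow (l + 1)).div_const
        (2 * (l + 1))).fun_neg.congr_deriv ?_
      push_cast
      field_simp
  have hibp := intervalIntegral.integral_mul_deriv_eq_deriv_mul hsin hweight
    ((by fun_prop : Continuous fun t => x * cos (x * t)).intervalIntegrable _ _)
    ((by fun_prop : Continuous fun t : ℝ => t * (1 - t ^ 2) ^ l).intervalIntegrable _ _)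
  norm_num at hibp
  rw [poissonInt, ← intervalIntegral.integral_const_mul]
  convert hibp using 1 <;> refine intervalIntegral.integral_congr fun t _ => ?_ <;> ring

theorem hasDerivAt_poissonInt (l : ℕ) (x : ℝ) :
    HasDerivAt (poissonInt l) (-(x / (2 * (l + 1)) * poissonInt (l + 1) x)) x := by
  have h := hasDerivAt_intervalIntegral_mul_comp_mul (w := fun t => (1 - t ^ 2) ^ l)
    (by fun_prop) hasDerivAt_cos continuous_sin.neg (fun y => by simpa using abs_sin_le_one y)
    (-1) 1 x
  have hneg : ∫ t in (-1 : ℝ)..1, (1 - t ^ 2) ^ l * (t * -sin (x * t)) =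
      -∫ t in (-1 : ℝ)..1, t * (1 - t ^ 2) ^ l * sin (x * t) := by
    rw [← intervalIntegral.integral_neg]
    exact intervalIntegral.integral_congr fun t _ => by ring
  rwa [hneg, integral_mul_sin_eq_poissonInt_succ] at h

theorem poissonInt_succ_succ (l : ℕ) (x : ℝ) :
    x ^ 2 * poissonInt (l + 2) x =
      2 * (l + 2) * (2 * l + 3) * poissonInt (l + 1) x -
        4 * (l + 1) * (l + 2) * poissonInt l x := by
  -- differentiate `∫ t (1 - t²)^l sin (x t) dt` under the integral sign and via its closed form
  have hS := hasDerivAt_intervalIntegral_mul_comp_mul (w := fun t => t * (1 - t ^ 2) ^ l)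
    (by fun_prop) hasDerivAt_sin continuous_cos abs_cos_le_one (-1) 1 x
  have hint : ∀ n : ℕ,
      IntervalIntegrable (fun t : ℝ => (1 - t ^ 2) ^ n * cos (x * t)) volume (-1) 1 :=
    fun n => (by fun_prop : Continuous _).intervalIntegrable _ _
  have hcos : ∫ t in (-1 : ℝ)..1, t * (1 - t ^ 2) ^ l * (t * cos (x * t)) =
      poissonInt l x - poissonInt (l + 1) x := by
    rw [poissonInt, poissonInt, ← intervalIntegral.integral_sub (hint l) (hint (l + 1))]
    refine intervalIntegral.integral_congr fun t _ => ?_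
    ring
  rw [hcos, funext (integral_mul_sin_eq_poissonInt_succ l)] at hS
  have hS' := ((hasDerivAt_id' x).div_const (2 * (l + 1))).mul (hasDerivAt_poissonInt (l + 1) x)
  have := hS.unique hS'
  push_cast at this ⊢
  field_simp at this
  linarith

theorem rayleighOp_iterate_sinc_eq {x : ℝ} (hx : x ≠ 0) (l : ℕ) :
    (rayleighOp^[l] fun w => sin w / w) x =
      (-1) ^ l / (2 ^ (l + 1) * l.factorial) * poissonInt l x := by
  induction l generalizing x with
  | zero =>
    simp only [Function.iterate_zero, id_eq, poissonInt_zero hx]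
    field_simp
    norm_num
  | succ l ih =>
    have heq : (rayleighOp^[l] fun w => sin w / w) =ᶠ[𝓝 x]
        fun y => (-1) ^ l / (2 ^ (l + 1) * l.factorial) * poissonInt l y :=
      eventually_ne_nhds hx |>.mono fun y hy => ih hy
    rw [Function.iterate_succ_apply', rayleighOp, heq.deriv_eq,
      ((hasDerivAt_poissonInt l x).const_mul _).deriv, Nat.factorial_succ]
    push_cast
    field_simp
    ring

theorem sphJ_eq_poissonInt {x : ℝ} (hx : x ≠ 0) (l : ℕ) :
    sphJ l x = x ^ l / (2 ^ (l + 1) * l.factorial) * poissonInt l x := by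
  rw [sphJ, rayleighOp_iterate_sinc_eq hx]
  have : ((-1 : ℝ) ^ l) ^ 2 = 1 := by rw [← pow_mul, mul_comm, pow_mul]; norm_num
  linear_combination (x ^ l / (2 ^ (l + 1) * l.factorial) * poissonInt l x) * this

theorem hasDerivAt_rayleighOp_iterate_sinc {x : ℝ} (hx : x ≠ 0) (l : ℕ) :
    HasDerivAt (rayleighOp^[l] fun w => sin w / w)
      (x * (rayleighOp^[l + 1] fun w => sin w / w) x) x := by
  have hdiff : DifferentiableAt ℝ (rayleighOp^[l] fun w => sin w / w) x :=
    (((hasDerivAt_poissonInt l x).const_mul _).differentiableAt).congr_of_eventuallyEq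
      (eventually_ne_nhds hx |>.mono fun y hy => rayleighOp_iterate_sinc_eq hy l)
  rw [Function.iterate_succ_apply', rayleighOp, mul_div_cancel₀ _ hx]
  exact hdiff.hasDerivAt

theorem hasDerivAt_sphJ {x : ℝ} (hx : x ≠ 0) (l : ℕ) :
    HasDerivAt (sphJ l) (l / x * sphJ l x - sphJ (l + 1) x) x := by
  refine (((hasDerivAt_pow l x).const_mul ((-1 : ℝ) ^ l)).fun_mul
    (hasDerivAt_rayleighOp_iterate_sinc hx l)).congr_deriv ?_
  simp only [sphJ]
  rcases l with _ | l
  · simp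
  · push_cast
    field_simp
    ring

theorem sphJ_succ_succ {x : ℝ} (hx : x ≠ 0) (l : ℕ) :
    sphJ (l + 2) x = (2 * l + 3) / x * sphJ (l + 1) x - sphJ l x := by
  have h := poissonInt_succ_succ l x
  simp only [sphJ_eq_poissonInt hx, Nat.factorial_succ, pow_succ]
  push_cast
  field_simp
  linear_combination h

theorem abs_sphJ_le_one {x : ℝ} (hx0 : x ≠ 0) (hx1 : |x| ≤ 1) (l : ℕ) :
    |sphJ l x| ≤ 1 := by
  have hden : (2 : ℝ) ≤ 2 ^ (l + 1) * l.factorial := by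
    have h2 : (2 : ℝ) ≤ 2 ^ (l + 1) := le_self_pow₀ (by norm_num) (by omega)
    have h1 : (1 : ℝ) ≤ l.factorial := by exact_mod_cast l.factorial_pos
    nlinarith
  rw [sphJ_eq_poissonInt hx0, abs_mul, abs_div, abs_pow,
    abs_of_pos (by positivity : (0 : ℝ) < 2 ^ (l + 1) * l.factorial)]
  calc |x| ^ l / (2 ^ (l + 1) * l.factorial) * |poissonInt l x| ≤ 1 / 2 * 2 :=
        mul_le_mul (div_le_div₀ zero_le_one (pow_le_one₀ (abs_nonneg x) hx1) two_pos hden)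
          (abs_poissonInt_le l x) (abs_nonneg _) (by norm_num)
    _ = 1 := by norm_num

theorem sphJ_zero_apply (x : ℝ) : sphJ 0 x = sin x / x := by
  simp [sphJ]

theorem sphJ_one_apply {x : ℝ} (hx : x ≠ 0) :
    sphJ 1 x = x⁻¹ * sphJ 0 x - cos x * x⁻¹ := by
  have hd : deriv (fun w => sin w / w) x = (cos x * x - sin x * 1) / x ^ 2 :=
    ((hasDerivAt_sin x).div (hasDerivAt_id' x) hx).deriv
  rw [sphJ_zero_apply]
  simp only [sphJ, Function.iterate_one, rayleighOp, hd]
  field_simp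
  ring

theorem isBigO_inv_mul {f : ℝ → ℝ} (hf : f =O[atTop] (·⁻¹)) :
    (fun x => x⁻¹ * f x) =O[atTop] (·⁻¹) := by
  simpa using (tendsto_inv_atTop_zero.isBigO_one ℝ).mul hf

theorem sphJ_isBigO_inv (l : ℕ) : sphJ l =O[atTop] (·⁻¹) := by
  suffices h : ∀ l, sphJ l =O[atTop] (·⁻¹) ∧ sphJ (l + 1) =O[atTop] (·⁻¹) from (h l).1
  have hne : ∀ᶠ x : ℝ in atTop, x ≠ 0 := eventually_ne_atTop 0
  intro l
  induction l with
  | zero =>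
    have h0 : sphJ 0 =O[atTop] (·⁻¹) := by
      refine isBigO_of_le _ fun x => ?_
      rw [sphJ_zero_apply, div_eq_mul_inv, norm_mul]
      exact mul_le_of_le_one_left (norm_nonneg _) (abs_sin_le_one x)
    have hcos : (fun x => cos x * x⁻¹) =O[atTop] (·⁻¹) := by
      refine isBigO_of_le _ fun x => ?_
      rw [norm_mul]
      exact mul_le_of_le_one_left (norm_nonneg _) (abs_cos_le_one x)
    refine ⟨h0, ((isBigO_inv_mul h0).sub hcos).congr' ?_ EventuallyEq.rfl⟩
    exact hne.mono fun x hx => (sphJ_one_apply hx).symm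
  | succ l ih =>
    refine ⟨ih.2, ?_⟩
    have h := ((isBigO_inv_mul ih.2).const_mul_left (2 * l + 3)).sub ih.1
    refine h.congr' (hne.mono fun x hx => ?_) EventuallyEq.rfl
    rw [sphJ_succ_succ hx]
    ring

theorem continuousAt_sphJ {x : ℝ} (hx : x ≠ 0) (l : ℕ) : ContinuousAt (sphJ l) x :=
  (hasDerivAt_sphJ hx l).continuousAt

theorem integrableOn_sphJ_sq (l : ℕ) : IntegrableOn (fun x => sphJ l x ^ 2) (Ioi 0) := by
  have hcont : ContinuousOn (fun x => sphJ l x ^ 2) (Ioi 0) :=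
    fun x hx => ((continuousAt_sphJ (ne_of_gt hx) l).pow 2).continuousWithinAt
  have hnear : IntegrableOn (fun x => sphJ l x ^ 2) (Ioc 0 1) := by
    refine (integrable_const 1).mono'
      ((hcont.mono Ioc_subset_Ioi_self).aestronglyMeasurable measurableSet_Ioc)
      (ae_restrict_of_forall_mem measurableSet_Ioc fun x hx => ?_)
    have hx1 : |x| ≤ 1 := by rw [abs_of_pos hx.1]; exact hx.2
    rw [norm_pow, Real.norm_eq_abs]
    exact pow_le_one₀ (abs_nonneg _) (abs_sphJ_le_one (ne_of_gt hx.1) hx1 l)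
  have hfar : IntegrableOn (fun x => sphJ l x ^ 2) (Ici 1) := by
    have hIci : Ici (1 : ℝ) ⊆ Ioi 0 := fun _ hx => lt_of_lt_of_le one_pos (mem_Ici.1 hx)
    refine ((hcont.mono hIci).locallyIntegrableOn measurableSet_Ici).integrableOn_of_isBigO_atTop
      (g := fun x => x ^ (-2 : ℝ)) ?_ (integrableAtFilter_rpow_atTop_iff.2 (by norm_num))
    refine ((sphJ_isBigO_inv l).pow 2).congr' EventuallyEq.rfl ?_
    filter_upwards [eventually_gt_atTop 0] with x hx
    rw [Real.rpow_neg hx.le, inv_pow, Real.rpow_two]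
  rw [← Ioc_union_Ici_eq_Ioi zero_lt_one]
  exact hnear.union hfar

section Energy

variable (l : ℕ)

theorem hasDerivAt_mul_sphJ_sq_add_sq {x : ℝ} (hx : x ≠ 0) :
    HasDerivAt (fun y => y * (sphJ l y ^ 2 + sphJ (l + 1) y ^ 2))
      ((2 * l + 1) * sphJ l x ^ 2 - (2 * l + 3) * sphJ (l + 1) x ^ 2) x := by
  refine ((hasDerivAt_id' x).fun_mul (((hasDerivAt_sphJ hx l).fun_pow 2).fun_add
    ((hasDerivAt_sphJ hx (l + 1)).fun_pow 2))).congr_deriv ?_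
  rw [sphJ_succ_succ hx]
  push_cast
  field_simp
  ring

theorem tendsto_mul_sphJ_sq_add_sq_atTop :
    Tendsto (fun y => y * (sphJ l y ^ 2 + sphJ (l + 1) y ^ 2)) atTop (𝓝 0) := by
  have hsq : (fun y => sphJ l y ^ 2 + sphJ (l + 1) y ^ 2) =O[atTop] fun y => y⁻¹ ^ 2 :=
    ((sphJ_isBigO_inv l).pow 2).add ((sphJ_isBigO_inv (l + 1)).pow 2)
  refine ((isBigO_refl id atTop).mul hsq).trans_tendsto (tendsto_inv_atTop_zero.congr' ?_)
  filter_upwards [eventually_ne_atTop 0] with y hy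
  field_simp
  simp

theorem tendsto_mul_sphJ_sq_add_sq_nhdsGT_zero :
    Tendsto (fun y => y * (sphJ l y ^ 2 + sphJ (l + 1) y ^ 2)) (𝓝[>] 0) (𝓝 0) := by
  have hsq : (fun y => sphJ l y ^ 2 + sphJ (l + 1) y ^ 2) =O[𝓝[>] 0] fun _ => (1 : ℝ) := by
    refine IsBigO.of_bound 2 ?_
    filter_upwards [Ioo_mem_nhdsGT one_pos] with y hy
    have hy1 : |y| ≤ 1 := by rw [abs_of_pos hy.1]; exact hy.2.le
    have h0 := abs_sphJ_le_one (ne_of_gt hy.1) hy1 l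
    have h1 := abs_sphJ_le_one (ne_of_gt hy.1) hy1 (l + 1)
    rw [Real.norm_of_nonneg (by positivity), norm_one, mul_one, ← sq_abs,
      ← sq_abs (sphJ (l + 1) y)]
    nlinarith [abs_nonneg (sphJ l y), abs_nonneg (sphJ (l + 1) y)]
  refine ((isBigO_refl id _).mul hsq).trans_tendsto ?_
  simp only [id, mul_one]
  exact tendsto_nhdsWithin_of_tendsto_nhds tendsto_id

theorem integral_sphJ_sq_succ :
    (2 * l + 3) * ∫ x in Ioi 0, sphJ (l + 1) x ^ 2 =
      (2 * l + 1) * ∫ x in Ioi 0, sphJ l x ^ 2 := by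
  have hcont : ContinuousWithinAt (fun y => y * (sphJ l y ^ 2 + sphJ (l + 1) y ^ 2)) (Ici 0) 0 := by
    rw [← continuousWithinAt_Ioi_iff_Ici, ContinuousWithinAt, zero_mul]
    exact tendsto_mul_sphJ_sq_add_sq_nhdsGT_zero l
  have h := integral_Ioi_of_hasDerivAt_of_tendsto hcont
    (fun x hx => hasDerivAt_mul_sphJ_sq_add_sq l (ne_of_gt hx))
    (((integrableOn_sphJ_sq l).const_mul _).sub ((integrableOn_sphJ_sq (l + 1)).const_mul _))
    (tendsto_mul_sphJ_sq_add_sq_atTop l)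
  rw [integral_sub ((integrableOn_sphJ_sq l).const_mul _)
    ((integrableOn_sphJ_sq (l + 1)).const_mul _), integral_const_mul, integral_const_mul] at h
  simp only [zero_mul, sub_zero] at h
  linarith

end Energy

theorem integral_mul_exp_neg_mul {x : ℝ} (hx : 0 < x) :
    ∫ t in Ioi 0, t * exp (-(x * t)) = 1 / x ^ 2 := by
  have h := integral_rpow_mul_exp_neg_mul_Ioi two_pos hx
  norm_num [Real.Gamma_two] at h
  rw [h]
  field_simp

theorem integral_sin_sq_mul_exp_neg_mul {t : ℝ} (ht : 0 < t) :
    ∫ x in Ioi 0, sin x ^ 2 * exp (-(t * x)) = 2 / (t * (t ^ 2 + 4)) := by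
  set A := -1 / (2 * t)
  set B := t / (2 * (t ^ 2 + 4))
  set C := -1 / (t ^ 2 + 4)
  have hderiv : ∀ x ∈ Ici (0 : ℝ), HasDerivAt
      (fun x => exp (-(t * x)) * (A + B * cos (2 * x) + C * sin (2 * x)))
      (sin x ^ 2 * exp (-(t * x))) x := by
    intro x _
    have hexp := ((hasDerivAt_id' x).const_mul t).fun_neg.exp
    have htrig := (((hasDerivAt_id' x).const_mul 2).cos.const_mul B |>.const_add A).fun_add
      (((hasDerivAt_id' x).const_mul 2).sin.const_mul C)
    refine (hexp.fun_mul htrig).congr_deriv ?_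
    rw [cos_two_mul, sin_two_mul, cos_sq']
    simp only [A, B, C]
    field_simp
    ring
  have hbdd : IsBoundedUnder (· ≤ ·) atTop
      (norm ∘ fun x => A + B * cos (2 * x) + C * sin (2 * x)) := by
    refine isBoundedUnder_of ⟨‖A‖ + ‖B‖ + ‖C‖, fun x => ?_⟩
    refine (norm_add₃_le).trans (add_le_add (add_le_add le_rfl ?_) ?_) <;>
      rw [norm_mul] <;>
      exact mul_le_of_le_one_right (norm_nonneg _) (by simp [abs_cos_le_one, abs_sin_le_one])
  have htop := (tendsto_exp_neg_atTop_nhds_zero.comp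
    (tendsto_id.const_mul_atTop ht)).zero_mul_isBoundedUnder_le hbdd
  rw [integral_Ioi_of_hasDerivAt_of_nonneg' hderiv (fun x _ => by positivity) htop]
  simp only [A, B, C, mul_zero, neg_zero, exp_zero, cos_zero, sin_zero]
  field_simp
  ring

theorem integral_two_div_sq_add_four : ∫ t in Ioi 0, 2 / (t ^ 2 + 4) = π / 2 := by
  have h := integral_comp_mul_left_Ioi (fun u => (1 + u ^ 2)⁻¹) 0 (inv_pos.2 two_pos)
  simp only [mul_zero, integral_Ioi_inv_one_add_sq, arctan_zero, sub_zero, smul_eq_mul,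
    inv_inv] at h
  have heq : (fun t : ℝ => 2 / (t ^ 2 + 4)) = fun t => 2⁻¹ * (1 + (2⁻¹ * t) ^ 2)⁻¹ := by
    ext t
    field_simp
    ring
  rw [heq, integral_const_mul, h]
  ring

theorem integral_sphJ_zero_sq : ∫ x in Ioi 0, sphJ 0 x ^ 2 = π / 2 := by
  set f : ℝ → ℝ → ℝ := fun x t => t * exp (-(x * t)) * sin x ^ 2
  have hf_nonneg : ∀ x ∈ Ioi (0 : ℝ), ∀ t ∈ Ioi (0 : ℝ), 0 ≤ f x t := fun x _ t ht => by
    have : 0 < t := ht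
    positivity
  have hinner_t : ∀ x ∈ Ioi (0 : ℝ), ∫ t in Ioi 0, f x t = sphJ 0 x ^ 2 := fun x hx => by
    rw [integral_mul_const, integral_mul_exp_neg_mul hx, sphJ_zero_apply]
    ring
  have hinner_x : ∀ t ∈ Ioi (0 : ℝ), ∫ x in Ioi 0, f x t = 2 / (t ^ 2 + 4) := fun t ht => by
    have ht : 0 < t := ht
    calc ∫ x in Ioi 0, f x t = ∫ x in Ioi 0, t * (sin x ^ 2 * exp (-(t * x))) :=
          integral_congr_ae (Eventually.of_forall fun x => by simp only [f]; ring_nf)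
      _ = 2 / (t ^ 2 + 4) := by
          rw [integral_const_mul, integral_sin_sq_mul_exp_neg_mul ht]
          field_simp
  have hint : Integrable (Function.uncurry f)
      ((volume.restrict (Ioi 0)).prod (volume.restrict (Ioi 0))) := by
    have hmeas : AEStronglyMeasurable (Function.uncurry f)
        ((volume.restrict (Ioi 0)).prod (volume.restrict (Ioi 0))) :=
      (by fun_prop : Continuous (Function.uncurry f)).aestronglyMeasurable
    refine (integrable_prod_iff hmeas).2 ⟨?_, ?_⟩
    · filter_upwards [ae_restrict_mem measurableSet_Ioi] with x hx
      have hx : 0 < x := hx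
      refine (Integrable.of_integral_ne_zero ?_).mul_const (sin x ^ 2)
      rw [integral_mul_exp_neg_mul hx]
      positivity
    · refine (integrableOn_sphJ_sq 0).congr ?_
      filter_upwards [ae_restrict_mem measurableSet_Ioi] with x hx
      rw [← hinner_t x hx]
      refine setIntegral_congr_fun measurableSet_Ioi fun t ht => ?_
      exact (Real.norm_of_nonneg (hf_nonneg x hx t ht)).symm
  rw [← setIntegral_congr_fun measurableSet_Ioi hinner_t, integral_integral_swap hint,
    setIntegral_congr_fun measurableSet_Ioi hinner_x, integral_two_div_sq_add_four]

theorem mul_integral_sphJ_sq (l : ℕ) : (2 * l + 1) * ∫ x in Ioi 0, sphJ l x ^ 2 = π / 2 := by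
  induction l with
  | zero => simpa using integral_sphJ_zero_sq
  | succ l ih =>
    rw [← ih, ← integral_sphJ_sq_succ l]
    push_cast
    ring

/-- `∫_0^∞ j_l(x)² dx = π/(2(2l+1))`; equivalently, for the potential `V(r) = α/r²`,
the first-order covariant-perturbation phase shift
`δ_l^{(1)}(k) = -α k ∫_0^∞ j_l(kr)² dr` equals `-πα/(2(2l+1))` for every `k > 0`. -/
theorem integral_sphJ_sq (l : ℕ) :
    (∫ x in Set.Ioi (0 : ℝ), (sphJ l x) ^ 2) = π / (2 * (2 * (l : ℝ) + 1)) ∧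
      ∀ (α k : ℝ), 0 < k →
        (-α * k * ∫ r in Set.Ioi (0 : ℝ), (sphJ l (k * r)) ^ 2) =
          -(π * α) / (2 * (2 * (l : ℝ) + 1)) := by
  have hval : ∫ x in Ioi 0, sphJ l x ^ 2 = π / (2 * (2 * l + 1)) := by
    rw [eq_div_iff (by positivity)]
    linear_combination 2 * mul_integral_sphJ_sq l
  refine ⟨hval, fun α k hk => ?_⟩
  rw [integral_comp_mul_left_Ioi (fun x => sphJ l x ^ 2) 0 hk, mul_zero, hval, smul_eq_mul]
  field_simp
end
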